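/- arXiv:2010.12343 — 3 statements merged into one kernel-verified Lean document; each statement's English description precedes it below -/
import Mathlib

section
/- Let G be a connected d-regular graph on n vertices with diameter k. Then k ≤ 3n/(d+1). -/
/-!
Along a shortest path between two vertices at distance `k = diam G`, the vertices at positions
`0, 3, 6, …` are pairwise at distance at least `3`, so their closed neighbourhoods, each of size
`d + 1`, are pairwise disjoint. There are `⌊k / 3⌋ + 1 > k / 3` of them, whence
`k (d + 1) ≤ 3 n`.
-/

open Finset

namespace SimpleGraph

variable {V : Type*} {G : SimpleGraph V} {u v : V}

namespace Walk

lemma dist_getVert_le_sub (p : G.Walk u v) {i j : ℕ} (hij : i ≤ j) :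
    G.dist (p.getVert i) (p.getVert j) ≤ j - i := by
  have h := dist_le ((p.drop i).take (j - i))
  rw [take_length, drop_getVert, Nat.add_sub_cancel' hij] at h
  exact h.trans inf_le_left

lemma dist_getVert_of_length_eq_dist (p : G.Walk u v) (hp : p.length = G.dist u v)
    {i j : ℕ} (hij : i ≤ j) (hj : j ≤ p.length) :
    G.dist (p.getVert i) (p.getVert j) = j - i := by
  refine le_antisymm (p.dist_getVert_le_sub hij) ?_
  have hu := (p.take i).reachable.dist_triangle_left (p.getVert j)
  have hv := (p.drop j).reachable.dist_triangle_right u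
  have hui := dist_le (p.take i)
  have hjv := dist_le (p.drop j)
  rw [take_length] at hui
  rw [drop_length] at hjv
  omega

end Walk

variable [Fintype V] [DecidableEq V] [DecidableRel G.Adj]

variable (G) in
def closedNeighborFinset (v : V) : Finset V := insert v (G.neighborFinset v)

lemma card_closedNeighborFinset : #(G.closedNeighborFinset v) = G.degree v + 1 := by
  rw [closedNeighborFinset, card_insert_of_notMem (by simp), card_neighborFinset_eq_degree]

lemma reachable_and_dist_le_one_of_mem_closedNeighborFinset {w : V}
    (hw : w ∈ G.closedNeighborFinset v) : G.Reachable v w ∧ G.dist v w ≤ 1 := by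
  rcases mem_insert.mp hw with rfl | hadj
  · simp
  · rw [mem_neighborFinset] at hadj
    exact ⟨hadj.reachable, (dist_le hadj.toWalk).trans_eq (Walk.length_cons _ _)⟩

lemma dist_le_two_of_mem_closedNeighborFinset {w : V} (hu : w ∈ G.closedNeighborFinset u)
    (hv : w ∈ G.closedNeighborFinset v) : G.dist u v ≤ 2 := by
  obtain ⟨huw, hdu⟩ := reachable_and_dist_le_one_of_mem_closedNeighborFinset hu
  obtain ⟨-, hdv⟩ := reachable_and_dist_le_one_of_mem_closedNeighborFinset hv
  have := huw.dist_triangle_left v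
  rw [dist_comm (u := w)] at this
  omega

lemma disjoint_closedNeighborFinset_of_two_lt_dist (h : 2 < G.dist u v) :
    Disjoint (G.closedNeighborFinset u) (G.closedNeighborFinset v) :=
  Finset.disjoint_left.mpr fun _ hu hv ↦ (dist_le_two_of_mem_closedNeighborFinset hu hv).not_gt h

lemma card_mul_succ_le_card_of_pairwise_two_lt_dist {ι : Type*} {d : ℕ}
    (hreg : G.IsRegularOfDegree d) (f : ι → V) (s : Finset ι)
    (hs : (s : Set ι).Pairwise fun i j ↦ 2 < G.dist (f i) (f j)) :
    #s * (d + 1) ≤ Fintype.card V := by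
  have hdisj : (s : Set ι).PairwiseDisjoint (G.closedNeighborFinset ∘ f) :=
    hs.mono' fun _ _ ↦ disjoint_closedNeighborFinset_of_two_lt_dist
  calc #s * (d + 1) = ∑ i ∈ s, #(G.closedNeighborFinset (f i)) := by
        simp only [card_closedNeighborFinset, hreg _, sum_const, smul_eq_mul]
    _ = #(s.biUnion (G.closedNeighborFinset ∘ f)) := (card_biUnion hdisj).symm
    _ ≤ Fintype.card V := card_le_univ _

end SimpleGraph

open SimpleGraph

/-- A connected `d`-regular graph on `n` vertices has diameter `k ≤ 3n/(d+1)`. -/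
theorem diam_le_of_regular {V : Type*} [Fintype V] (G : SimpleGraph V)
    [DecidableRel G.Adj] (d : ℕ) (hconn : G.Connected)
    (hreg : G.IsRegularOfDegree d) :
    (G.diam : ℝ) ≤ 3 * (Fintype.card V) / (d + 1) := by
  classical
  have := hconn.nonempty
  obtain ⟨u, v, huv⟩ := G.exists_dist_eq_diam
  obtain ⟨p, hp⟩ := hconn.exists_walk_length_eq_dist u v
  set k := G.diam
  have hsep : (range (k / 3 + 1) : Set ℕ).Pairwise
      fun i j ↦ 2 < G.dist (p.getVert (3 * i)) (p.getVert (3 * j)) := by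
    intro i hi j hj hij
    simp only [coe_range, Set.mem_Iio] at hi hj
    rcases hij.lt_or_gt with hij | hij
    · rw [p.dist_getVert_of_length_eq_dist hp (by omega) (by omega)]; omega
    · rw [dist_comm, p.dist_getVert_of_length_eq_dist hp (by omega) (by omega)]; omega
  have hpack := card_mul_succ_le_card_of_pairwise_two_lt_dist hreg _ _ hsep
  rw [card_range] at hpack
  have hk : k * (d + 1) ≤ 3 * Fintype.card V :=
    calc k * (d + 1) ≤ 3 * (k / 3 + 1) * (d + 1) := Nat.mul_le_mul_right _ (by omega)
      _ ≤ 3 * Fintype.card V := by rw [mul_assoc]; exact Nat.mul_le_mul_left _ hpack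
  rw [le_div_iff₀ (by positivity)]
  exact_mod_cast hk
end

section
/- For any set S of vertices of the n-dimensional hypercube graph Q_n (on 2^n vertices), the number of edges of Q_n with exactly one endpoint in S is at least |S| · (n - log₂|S|). -/
/-!
Count ordered pairs of adjacent vertices. Every vertex has `n` neighbours, so the boundary of `S`
is `n |S|` minus the number `e(S)` of ordered adjacent pairs inside `S`, and it suffices to show
`e(S) ≤ |S| log₂ |S|`. Splitting `Q_{n+1}` along the first coordinate into two copies of `Q_n`
with slices `A`, `B` of `S` gives `e(S) = e(A) + e(B) + 2 |A ∩ B|`, and the induction closes with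
`a log₂ a + b log₂ b + 2 min(a, b) ≤ (a + b) log₂ (a + b)`.
-/

open Finset Real

theorem le_logb_two_one_add {t : ℝ} (h0 : 0 ≤ t) (h1 : t ≤ 1) : t ≤ logb 2 (1 + t) := by
  rw [le_logb_iff_rpow_le one_lt_two (by linarith)]
  simpa [one_add_one_eq_two, add_comm] using
    rpow_one_add_le_one_add_mul_self (s := 1) (by norm_num) h0 h1

theorem mul_logb_add_mul_logb_add_two_mul_min_le {a b : ℝ} (ha : 0 ≤ a) (hb : 0 ≤ b) :
    a * logb 2 a + b * logb 2 b + 2 * min a b ≤ (a + b) * logb 2 (a + b) := by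
  wlog hba : b ≤ a generalizing a b
  · have := this hb ha (le_of_not_ge hba)
    rwa [min_comm, add_comm b a, add_comm (b * _)] at this
  rw [min_eq_right hba]
  rcases hb.eq_or_lt with rfl | hb
  · simp
  have ha : 0 < a := hb.trans_le hba
  have hlarge : b ≤ a * (logb 2 (a + b) - logb 2 a) := by
    rw [← logb_div (by positivity) ha.ne', add_div, div_self ha.ne']
    calc b = a * (b / a) := by field_simp
      _ ≤ a * logb 2 (1 + b / a) := by
        gcongr
        exact le_logb_two_one_add (by positivity) ((div_le_one ha).2 hba)
  have hsmall : b ≤ b * (logb 2 (a + b) - logb 2 b) := by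
    rw [← logb_div (by positivity) hb.ne']
    have : 1 ≤ logb 2 ((a + b) / b) := by
      rw [le_logb_iff_rpow_le one_lt_two (by positivity), rpow_one, le_div_iff₀ hb]
      linarith
    nlinarith
  linarith

namespace Hypercube

variable {ι : Type*} [Fintype ι]

section Edges

variable {β : Type*} [DecidableEq β]

def edgesBetween (A B : Finset (ι → β)) : ℕ := #{p ∈ A ×ˢ B | hammingDist p.1 p.2 = 1}

theorem edgesBetween_comm (A B : Finset (ι → β)) : edgesBetween A B = edgesBetween B A := by
  refine card_nbij' Prod.swap Prod.swap ?_ ?_ (fun _ _ => rfl) (fun _ _ => rfl) <;>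
    exact fun p => by simp [hammingDist_comm p.1, and_comm]

theorem edgesBetween_union_left {A B : Finset (ι → β)} (h : Disjoint A B) (C : Finset (ι → β)) :
    edgesBetween (A ∪ B) C = edgesBetween A C + edgesBetween B C := by
  rw [edgesBetween, union_product, filter_union,
    card_union_of_disjoint (disjoint_filter_filter (disjoint_product.2 (Or.inl h)))]
  rfl

theorem edgesBetween_union_right (A : Finset (ι → β)) {B C : Finset (ι → β)} (h : Disjoint B C) :
    edgesBetween A (B ∪ C) = edgesBetween A B + edgesBetween A C := by
  simp only [edgesBetween_comm A, edgesBetween_union_left h]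

end Edges

section Degree

variable [DecidableEq ι]

theorem card_hammingDist_eq_choose (x : ι → Bool) (k : ℕ) :
    #{y | hammingDist x y = k} = (Fintype.card ι).choose k := by
  rw [← card_univ, ← card_powersetCard]
  have hflip (D : Finset ι) : ({i | x i ≠ xor (x i) (decide (i ∈ D))} : Finset ι) = D := by
    ext i
    cases x i <;> by_cases hi : i ∈ D <;> simp [hi]
  -- `y` is determined by the set of coordinates where it differs from `x`.
  refine card_nbij' (fun y => ({i | x i ≠ y i} : Finset ι))
    (fun D i => xor (x i) (decide (i ∈ D))) ?_ ?_ ?_ ?_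
  · intro y hy
    simpa [hammingDist] using hy
  · intro D hD
    simp_all [hammingDist]
  · intro y _
    funext i
    cases hx : x i <;> cases hy : y i <;> simp [hx, hy]
  · intro D _
    exact hflip D

theorem edgesBetween_univ (S : Finset (ι → Bool)) :
    edgesBetween S univ = #S * Fintype.card ι := by
  rw [edgesBetween, card_filter, sum_product, sum_const_nat fun x _ => ?_]
  rw [← card_filter, card_hammingDist_eq_choose, Nat.choose_one_right]

theorem edgesBetween_self_add_edgesBetween_compl (S : Finset (ι → Bool)) :
    edgesBetween S S + edgesBetween S Sᶜ = #S * Fintype.card ι := by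
  rw [← edgesBetween_union_right S disjoint_compl_right, union_compl, edgesBetween_univ]

end Degree

section Cons

variable {β : Type*} [DecidableEq β] {n : ℕ}

theorem hammingDist_cons_cons (a b : β) (u v : Fin n → β) :
    hammingDist (Fin.cons a u : Fin (n + 1) → β) (Fin.cons b v) =
      (if a = b then 0 else 1) + hammingDist u v := by
  simp [hammingDist, card_filter, Fin.sum_univ_succ]

def consEmb (b : β) : (Fin n → β) ↪ (Fin (n + 1) → β) :=
  ⟨fun u => Fin.cons b u, Fin.cons_right_injective (α := fun _ => β) b⟩

theorem edgesBetween_map_consEmb (a b : β) (A B : Finset (Fin n → β)) :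
    edgesBetween (A.map (consEmb a)) (B.map (consEmb b)) =
      #{p ∈ A ×ˢ B | hammingDist (Fin.cons a p.1 : Fin (n + 1) → β) (Fin.cons b p.2) = 1} := by
  rw [edgesBetween, ← prodMap_map_product, filter_map, card_map]
  rfl

theorem edgesBetween_map_consEmb_self (b : β) (A B : Finset (Fin n → β)) :
    edgesBetween (A.map (consEmb b)) (B.map (consEmb b)) = edgesBetween A B := by
  simp only [edgesBetween_map_consEmb, hammingDist_cons_cons, if_pos, zero_add]
  rfl

theorem edgesBetween_map_consEmb_of_ne {a b : β} (hab : a ≠ b) (A B : Finset (Fin n → β)) :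
    edgesBetween (A.map (consEmb a)) (B.map (consEmb b)) = #(A ∩ B) := by
  simp only [edgesBetween_map_consEmb, hammingDist_cons_cons, if_neg hab, add_eq_left,
    hammingDist_eq_zero]
  refine card_nbij' Prod.fst (fun u => (u, u)) ?_ ?_ ?_ ?_ <;> intro <;> aesop

end Cons

section Slices

variable {n : ℕ}

def slice (S : Finset (Fin (n + 1) → Bool)) (b : Bool) : Finset (Fin n → Bool) :=
  {u | Fin.cons b u ∈ S}

theorem eq_map_slice_union_map_slice (S : Finset (Fin (n + 1) → Bool)) :
    S = (slice S false).map (consEmb false) ∪ (slice S true).map (consEmb true) := by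
  ext x
  induction x using Fin.consCases with
  | cons b u => cases b <;> simp [slice, consEmb]

theorem disjoint_map_consEmb (A B : Finset (Fin n → Bool)) :
    Disjoint (A.map (consEmb false)) (B.map (consEmb true)) := by
  simp [disjoint_left, consEmb]

theorem card_eq_card_slice_add_card_slice (S : Finset (Fin (n + 1) → Bool)) :
    #S = #(slice S false) + #(slice S true) := by
  conv_lhs => rw [eq_map_slice_union_map_slice S]
  rw [card_union_of_disjoint (disjoint_map_consEmb _ _), card_map, card_map]

theorem edgesBetween_self_eq_slices (S : Finset (Fin (n + 1) → Bool)) :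
    edgesBetween S S = edgesBetween (slice S false) (slice S false) +
      edgesBetween (slice S true) (slice S true) + 2 * #(slice S false ∩ slice S true) := by
  conv_lhs => rw [eq_map_slice_union_map_slice S]
  rw [edgesBetween_union_left (disjoint_map_consEmb _ _),
    edgesBetween_union_right _ (disjoint_map_consEmb _ _),
    edgesBetween_union_right _ (disjoint_map_consEmb _ _),
    edgesBetween_map_consEmb_self, edgesBetween_map_consEmb_self,
    edgesBetween_map_consEmb_of_ne (by decide), edgesBetween_map_consEmb_of_ne (by decide),
    inter_comm (slice S true)]
  ring

end Slices

theorem edgesBetween_self_le {n : ℕ} (S : Finset (Fin n → Bool)) :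
    (edgesBetween S S : ℝ) ≤ #S * logb 2 #S := by
  induction n with
  | zero =>
    have : edgesBetween S S = 0 := by
      simp [edgesBetween, hammingDist]
    rw [this, Nat.cast_zero, logb]
    positivity
  | succ n ih =>
    set A := slice S false
    set B := slice S true
    have hinter : (#(A ∩ B) : ℝ) ≤ min (#A : ℝ) #B := le_min
      (mod_cast card_le_card inter_subset_left) (mod_cast card_le_card inter_subset_right)
    rw [edgesBetween_self_eq_slices, card_eq_card_slice_add_card_slice]
    push_cast
    linarith [ih A, ih B, mul_logb_add_mul_logb_add_two_mul_min_le (a := #A) (b := #B)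
      (Nat.cast_nonneg _) (Nat.cast_nonneg _)]

end Hypercube

/-- Edge isoperimetric inequality for the hypercube: for any set `S` of vertices of
the `n`-dimensional hypercube `Q_n` (vertices are binary strings of length `n`,
adjacent iff they differ in exactly one coordinate), the number of edges with
exactly one endpoint in `S` is at least `|S| · (n - log₂ |S|)`. -/
theorem hypercube_edge_isoperimetric (n : ℕ) (S : Finset (Fin n → Bool)) :
    (S.card : ℝ) * (n - Real.logb 2 S.card) ≤
      ((S ×ˢ Sᶜ).filter
        (fun p => (Finset.univ.filter fun i => p.1 i ≠ p.2 i).card = 1)).card := by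
  have hsum : (Hypercube.edgesBetween S S : ℝ) + Hypercube.edgesBetween S Sᶜ = #S * n := by
    exact_mod_cast Fintype.card_fin n ▸ Hypercube.edgesBetween_self_add_edgesBetween_compl S
  have hinner := Hypercube.edgesBetween_self_le S
  change _ ≤ (Hypercube.edgesBetween S Sᶜ : ℝ)
  linarith [mul_sub (#S : ℝ) n (logb 2 #S)]
end

section
/- Let T_1, ..., T_m be independent, identically distributed random variables, each equal to the hitting time of state n for the Markov chain on {0,...,n} that advances with probability 1/4 each step. For any fixed ε > 0 and sufficiently large n (with m ≤ n), E[max_i T_i] ≤ (4+5ε)n. -/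
open MeasureTheory ProbabilityTheory Real Filter Finset

/-!
Chernoff's bound, with the moment generating function of a Bernoulli(1/4) step, gives
`P(fewer than n successes in t steps) ≤ exp (l n - c t)` with `c = l (1 - l) / 4`, so by a union
bound `P(max T_i > t) ≤ m exp (l n - c t)` decays geometrically in `t`. Summing
`E[max T_i] = ∑ₜ P(max T_i > t)` with the trivial bound `1` below `t₀ = ⌈(4 + 4ε) n⌉` and the
geometric bound above gives `t₀ + m exp (l n - c t₀) / (1 - exp (-c))`. For `l = ε / (2 (1 + ε))`
we have `c (4 + 4ε) > l`, so with `m ≤ n` the second term vanishes as `n → ∞`.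
-/

section

variable {Ω : Type*} [MeasurableSpace Ω] {μ : Measure Ω}

lemma measurable_card_filter {ι : Type*} {Y : ι → Ω → Bool} (hYm : ∀ q, Measurable (Y q))
    (F : Finset ι) : Measurable fun ω => #{q ∈ F | Y q ω = true} := by
  simp_rw [card_filter]
  exact Finset.measurable_sum _ fun q _ =>
    Measurable.ite (hYm q (measurableSet_singleton true)) measurable_const measurable_const

lemma mgf_boole [IsProbabilityMeasure μ] {W : Ω → Bool} (hWm : Measurable W) {p : ℝ}
    (hp : 0 ≤ p) (hWp : μ {ω | W ω = true} = ENNReal.ofReal p) (t : ℝ) :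
    mgf (fun ω => if W ω = true then (1 : ℝ) else 0) μ t = 1 - p + p * exp t := by
  have hA : MeasurableSet {ω | W ω = true} := hWm (measurableSet_singleton true)
  have hfun : (fun ω => exp (t * if W ω = true then (1 : ℝ) else 0))
      = fun ω => Set.indicator {ω | W ω = true} (fun _ => exp t - 1) ω + 1 := by
    funext ω
    by_cases h : W ω = true <;> simp [h]
  rw [mgf, hfun, integral_add ((integrable_const _).indicator hA) (integrable_const 1),
    integral_indicator_const _ hA, integral_const, measureReal_def, hWp,
    ENNReal.toReal_ofReal hp]
  simp
  ring

lemma exp_neg_le_one_sub_add_sq {x : ℝ} (hx : 0 ≤ x) : exp (-x) ≤ 1 - x + x ^ 2 := by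
  have h1 : exp (-x) * (1 + x) ≤ 1 := by
    nlinarith [add_one_le_exp x, exp_pos (-x), exp_neg x, mul_inv_cancel₀ (exp_pos x).ne']
  nlinarith [pow_nonneg hx 3, exp_pos (-x)]

lemma one_sub_add_mul_exp_neg_le {p l : ℝ} (hp : 0 ≤ p) (hl : 0 ≤ l) :
    1 - p + p * exp (-l) ≤ exp (-(p * (l * (1 - l)))) := by
  nlinarith [exp_neg_le_one_sub_add_sq hl, add_one_le_exp (-(p * (l * (1 - l))))]

lemma mgf_card_filter_le {ι : Type*} {Y : ι → Ω → Bool} (hYm : ∀ q, Measurable (Y q))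
    (hYi : iIndepFun Y μ) {p : ℝ} (hp : 0 ≤ p)
    (hYp : ∀ q, μ {ω | Y q ω = true} = ENNReal.ofReal p) (F : Finset ι) {l : ℝ} (hl : 0 ≤ l) :
    mgf (fun ω => (#{q ∈ F | Y q ω = true} : ℝ)) μ (-l) ≤ exp (-(p * (l * (1 - l)))) ^ #F := by
  have := hYi.isProbabilityMeasure
  set Z : ι → Ω → ℝ := fun q ω => if Y q ω = true then 1 else 0
  have hZm : ∀ q, Measurable (Z q) := fun q =>
    Measurable.ite (hYm q (measurableSet_singleton true)) measurable_const measurable_const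
  have hZi : iIndepFun Z μ :=
    hYi.comp (fun _ b => if b = true then (1 : ℝ) else 0) fun _ => measurable_from_top
  have hsum : (fun ω => (#{q ∈ F | Y q ω = true} : ℝ)) = ∑ q ∈ F, Z q := by
    ext ω
    rw [card_filter]
    push_cast
    simp [Z, Finset.sum_apply]
  rw [hsum, hZi.mgf_sum hZm, ← prod_const]
  refine prod_le_prod (fun q _ => mgf_nonneg) fun q _ => ?_
  rw [mgf_boole (hYm q) hp (hYp q)]
  exact one_sub_add_mul_exp_neg_le hp hl

lemma measure_card_filter_lt_le {ι : Type*} {Y : ι → Ω → Bool} (hYm : ∀ q, Measurable (Y q))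
    (hYi : iIndepFun Y μ) {p : ℝ} (hp : 0 ≤ p)
    (hYp : ∀ q, μ {ω | Y q ω = true} = ENNReal.ofReal p) (F : Finset ι) (n : ℕ) {l : ℝ}
    (hl : 0 ≤ l) :
    μ {ω | #{q ∈ F | Y q ω = true} < n}
      ≤ ENNReal.ofReal (exp (l * n - p * (l * (1 - l)) * #F)) := by
  have := hYi.isProbabilityMeasure
  set X : Ω → ℝ := fun ω => #{q ∈ F | Y q ω = true}
  have hXm : Measurable X := measurable_from_nat.comp (measurable_card_filter hYm F)
  have hint : Integrable (fun ω => exp (-l * X ω)) μ := by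
    refine Integrable.mono' (integrable_const 1) (hXm.const_mul _).exp.aestronglyMeasurable
      (Eventually.of_forall fun ω => ?_)
    rw [norm_of_nonneg (exp_pos _).le, exp_le_one_iff]
    nlinarith [(#{q ∈ F | Y q ω = true}).cast_nonneg (α := ℝ)]
  have hexp : exp (l * n - p * (l * (1 - l)) * #F)
      = exp (-(-l) * n) * exp (-(p * (l * (1 - l)))) ^ #F := by
    rw [← exp_nat_mul, ← exp_add]
    ring_nf
  calc μ {ω | #{q ∈ F | Y q ω = true} < n}
      ≤ μ {ω | X ω ≤ n} := measure_mono fun ω (hω : _ < n) => by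
        simp only [Set.mem_ofPred_eq, X]
        exact_mod_cast hω.le
    _ = ENNReal.ofReal (μ.real {ω | X ω ≤ n}) := (ofReal_measureReal (measure_ne_top _ _)).symm
    _ ≤ ENNReal.ofReal (exp (l * n - p * (l * (1 - l)) * #F)) := by
        rw [hexp]
        gcongr
        exact (measure_le_le_exp_mul_mgf (n : ℝ) (neg_nonpos.mpr hl) hint).trans
          (by gcongr; exact mgf_card_filter_le hYm hYi hp hYp F hl)

lemma lintegral_natCast_le_tsum_measure {X : Ω → ℕ} {E : ℕ → Set Ω}
    (hE : ∀ t, MeasurableSet (E t)) (hXE : ∀ t ω, t < X ω → ω ∈ E t) :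
    ∫⁻ ω, (X ω : ENNReal) ∂μ ≤ ∑' t, μ (E t) := by
  have hpt : ∀ ω, (X ω : ENNReal) ≤ ∑' t, (E t).indicator 1 ω := fun ω =>
    calc (X ω : ENNReal) = ∑ t ∈ range (X ω), (E t).indicator 1 ω := by
          rw [sum_congr rfl fun t ht => Set.indicator_of_mem (hXE t ω (mem_range.1 ht)) _]
          simp
      _ ≤ ∑' t, (E t).indicator 1 ω := ENNReal.sum_le_tsum _
  calc ∫⁻ ω, (X ω : ENNReal) ∂μ ≤ ∫⁻ ω, ∑' t, (E t).indicator 1 ω ∂μ := lintegral_mono hpt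
    _ = ∑' t, μ (E t) := by
      rw [lintegral_tsum fun t => (measurable_one.indicator (hE t)).aemeasurable]
      exact tsum_congr fun t => lintegral_indicator_one (hE t)

lemma integral_natCast_le_of_lintegral_le {X : Ω → ℕ} {B : ℝ} (hB : 0 ≤ B)
    (h : ∫⁻ ω, (X ω : ENNReal) ∂μ ≤ ENNReal.ofReal B) : ∫ ω, (X ω : ℝ) ∂μ ≤ B :=
  calc ∫ ω, (X ω : ℝ) ∂μ ≤ ‖∫ ω, (X ω : ℝ) ∂μ‖ := le_norm_self _
    _ ≤ (∫⁻ ω, ENNReal.ofReal ‖(X ω : ℝ)‖ ∂μ).toReal := norm_integral_le_lintegral_norm _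
    _ ≤ B := ENNReal.toReal_le_of_le_ofReal hB (by simpa using h)

lemma ENNReal.tsum_le_of_le_one_of_le_geometric {f : ℕ → ENNReal} {A r : ℝ} (hA : 0 ≤ A)
    (hr0 : 0 ≤ r) (hr1 : r < 1) (hf1 : ∀ t, f t ≤ 1)
    (hfA : ∀ t, f t ≤ ENNReal.ofReal (A * r ^ t)) (k : ℕ) :
    ∑' t, f t ≤ ENNReal.ofReal (k + A * r ^ k / (1 - r)) :=
  calc ∑' t, f t = ∑ t ∈ range k, f t + ∑' j, f (j + k) :=
        (ENNReal.summable.sum_add_tsum_nat_add').symm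
    _ ≤ ∑ t ∈ range k, 1 + ∑' j, ENNReal.ofReal (A * r ^ k * r ^ j) := by
        gcongr with t _ j
        · exact hf1 t
        · simpa [pow_add, mul_assoc, mul_comm (r ^ j)] using hfA (j + k)
    _ = ENNReal.ofReal (k + A * r ^ k / (1 - r)) := by
        rw [← ENNReal.ofReal_tsum_of_nonneg (fun j => by positivity)
            ((summable_geometric_of_lt_one hr0 hr1).mul_left _),
          tsum_mul_left, tsum_geometric_of_lt_one hr0 hr1,
          ENNReal.ofReal_add (by positivity) (div_nonneg (by positivity) (by linarith))]
        simp [div_eq_mul_inv]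

lemma eventually_ceil_add_mul_exp_le {α ε c l : ℝ} (hα : 0 ≤ α) (hε : 0 < ε) (hc : 0 < c)
    (hlc : l < c * α) :
    ∀ᶠ n : ℕ in atTop, (⌈α * n⌉₊ : ℝ) + n * exp (l * n - c * ⌈α * n⌉₊) / (1 - exp (-c))
      ≤ α * n + ε * n := by
  have hgap : 0 < 1 - exp (-c) := by simp [hc]
  have hsmall : ∀ᶠ n : ℕ in atTop, n * exp (-(c * α - l)) ^ n < 1 - exp (-c) :=
    (tendsto_order.1 (tendsto_self_mul_const_pow_of_lt_one (exp_pos _).le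
      (exp_lt_one_iff.2 (by linarith)))).2 _ hgap
  have hlarge : ∀ᶠ n : ℕ in atTop, 2 / ε ≤ n :=
    tendsto_natCast_atTop_atTop.eventually_ge_atTop _
  filter_upwards [hsmall, hlarge] with n hsmall hlarge
  have hceil_ge : α * n ≤ ⌈α * n⌉₊ := Nat.le_ceil _
  have hceil_lt : (⌈α * n⌉₊ : ℝ) < α * n + 1 := Nat.ceil_lt_add_one (by positivity)
  have htail : n * exp (l * n - c * ⌈α * n⌉₊) / (1 - exp (-c)) ≤ 1 := by
    rw [div_le_one hgap]
    calc n * exp (l * n - c * ⌈α * n⌉₊) ≤ n * exp (-(c * α - l)) ^ n := by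
          rw [← exp_nat_mul]
          gcongr
          nlinarith
      _ ≤ 1 - exp (-c) := hsmall.le
  have : 2 ≤ ε * n := by rwa [div_le_iff₀ hε, mul_comm] at hlarge
  linarith

lemma lintegral_sup_hittingTime_le {ι : Type*} [Fintype ι] {Y : ι × ℕ → Ω → Bool}
    (hYm : ∀ q, Measurable (Y q)) (hYi : iIndepFun Y μ) {p : ℝ} (hp : 0 < p)
    (hYp : ∀ q, μ {ω | Y q ω = true} = ENNReal.ofReal p) {n : ℕ} {T : ι → Ω → ℕ}
    (hT : ∀ i ω, T i ω = sInf {t | n ≤ #{s ∈ range t | Y (i, s) ω = true}})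
    {l : ℝ} (hl0 : 0 < l) (hl1 : l < 1) (k : ℕ) :
    ∫⁻ ω, ((univ.sup (T · ω) : ℕ) : ENNReal) ∂μ ≤ ENNReal.ofReal (k + Fintype.card ι *
      exp (l * n - p * (l * (1 - l)) * k) / (1 - exp (-(p * (l * (1 - l)))))) := by
  have := hYi.isProbabilityMeasure
  set c := p * (l * (1 - l))
  have hc : 0 < c := mul_pos hp (mul_pos hl0 (sub_pos.2 hl1))
  have hexp : ∀ t : ℕ, exp (l * n - c * t) = exp (l * n) * exp (-c) ^ t := fun t => by
    rw [← exp_nat_mul, ← exp_add]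
    ring_nf
  set E : ℕ → Set Ω := fun t => ⋃ i, {ω | #{s ∈ range t | Y (i, s) ω = true} < n}
  have hE_meas : ∀ t, MeasurableSet (E t) := fun t => MeasurableSet.iUnion fun i =>
    measurable_card_filter (fun s => hYm (i, s)) (range t) measurableSet_Iio
  have hE_sup : ∀ t ω, t < univ.sup (T · ω) → ω ∈ E t := by
    intro t ω ht
    obtain ⟨i, -, hi⟩ := Finset.lt_sup_iff.1 ht
    rw [hT] at hi
    have hlt := Nat.notMem_of_lt_sInf hi
    rw [Set.mem_ofPred_eq, not_le] at hlt
    exact Set.mem_iUnion.2 ⟨i, hlt⟩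
  have hE_le : ∀ t, μ (E t) ≤ ENNReal.ofReal (Fintype.card ι * exp (l * n) * exp (-c) ^ t) := by
    intro t
    calc μ (E t) ≤ ∑ i, μ {ω | #{s ∈ range t | Y (i, s) ω = true} < n} :=
          measure_iUnion_fintype_le _ _
      _ ≤ ∑ _i : ι, ENNReal.ofReal (exp (l * n - c * t)) := sum_le_sum fun i _ => by
          simpa using measure_card_filter_lt_le (fun s => hYm (i, s))
            (hYi.precomp (Prod.mk_right_injective i)) hp.le (fun s => hYp (i, s)) (range t) n
            hl0.le
      _ = _ := by
          rw [sum_const, card_univ, nsmul_eq_mul, hexp, mul_assoc,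
            ENNReal.ofReal_mul (Nat.cast_nonneg _), ENNReal.ofReal_natCast]
  calc ∫⁻ ω, ((univ.sup (T · ω) : ℕ) : ENNReal) ∂μ ≤ ∑' t, μ (E t) :=
        lintegral_natCast_le_tsum_measure hE_meas hE_sup
    _ ≤ _ := ENNReal.tsum_le_of_le_one_of_le_geometric (by positivity) (exp_pos _).le
          (exp_lt_one_iff.2 (by linarith)) (fun t => prob_le_one) hE_le k
    _ = _ := by rw [hexp, mul_assoc]

end

/-- Let `T_1, …, T_m` be i.i.d. copies of the hitting time of state `n` for the
Markov chain on `{0,…,n}` that advances with probability `1/4` each step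
(realized by independent Bernoulli(1/4) steps `Y (i, s)`).  For fixed `ε > 0`
and all sufficiently large `n`, if `m ≤ n` then `E[max_i T_i] ≤ (4+5ε)n`. -/
theorem expected_max_hitting_time (ε : ℝ) (hε : 0 < ε) :
    ∃ N₀ : ℕ, ∀ n : ℕ, N₀ ≤ n → ∀ m : ℕ, m ≤ n →
      ∀ {Ω : Type} [MeasureSpace Ω] [IsProbabilityMeasure (ℙ : Measure Ω)]
        (Y : Fin m × ℕ → Ω → Bool),
        (∀ q, Measurable (Y q)) →
        iIndepFun Y ℙ →
        (∀ q, ℙ {ω | Y q ω = true} = ENNReal.ofReal (1 / 4)) →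
        ∀ T : Fin m → Ω → ℕ,
          (∀ i ω, T i ω = sInf {t | n ≤
            ((Finset.range t).filter (fun s => Y (i, s) ω = true)).card}) →
          ∫ ω, ((Finset.univ.sup (fun i => T i ω) : ℕ) : ℝ) ≤ (4 + 5 * ε) * n := by
  set l := ε / (2 * (1 + ε)) with hl
  set c := 1 / 4 * (l * (1 - l)) with hc_def
  have hl0 : 0 < l := by positivity
  have hl1 : l < 1 := by
    rw [hl, div_lt_one (by positivity)]
    linarith
  have hc : 0 < c := mul_pos (by norm_num) (mul_pos hl0 (sub_pos.2 hl1))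
  have hlc : l < c * (4 + 4 * ε) := by
    have : (1 - l) * (1 + ε) = 1 + ε / 2 := by
      rw [hl]
      field_simp
      ring
    rw [hc_def]
    nlinarith
  obtain ⟨N₀, hN₀⟩ := eventually_atTop.1
    (eventually_ceil_add_mul_exp_le (by positivity : 0 ≤ 4 + 4 * ε) hε hc hlc)
  refine ⟨N₀, fun n hn m hm Ω _ _ Y hYm hYi hYp T hT => ?_⟩
  set k := ⌈(4 + 4 * ε) * n⌉₊
  refine integral_natCast_le_of_lintegral_le (by positivity)
    ((lintegral_sup_hittingTime_le hYm hYi (by norm_num) hYp hT hl0 hl1 k).trans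
      (ENNReal.ofReal_le_ofReal ?_))
  have hgap : 0 < 1 - exp (-c) := sub_pos.2 (exp_lt_one_iff.2 (neg_lt_zero.2 hc))
  calc (k : ℝ) + Fintype.card (Fin m) * exp (l * n - c * k) / (1 - exp (-c))
      ≤ k + n * exp (l * n - c * k) / (1 - exp (-c)) := by
        gcongr
        simpa using hm
    _ ≤ (4 + 4 * ε) * n + ε * n := hN₀ n hn
    _ = (4 + 5 * ε) * n := by ring
end
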